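/- arXiv:2105.06244 — 7 statements merged into one kernel-verified Lean document; each statement's English description precedes it below -/
import Mathlib

section
/- Let k be a field and n a natural number. The subspace η = {((x,z),(x,−z)) : x, z ∈ k^n} of (k^n ⊕ k^n) × (k^n ⊕ k^n) is Lagrangian with respect to the direct-sum symplectic form (ω ⊕ ω)(((x,z),(x',z')),((u,w),(u',w'))) = ω((x,z),(u,w)) + ω((x',z'),(u',w')), where ω is the standard symplectic form on k^n ⊕ k^n. (This subspace is the cap making the category of Lagrangian relations compact closed.) -/
namespace Statement7

variable {k : Type*} [Field k]

/-- Dot product on `k^n`. -/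
def dot {n : ℕ} (x y : Fin n → k) : k := ∑ i, x i * y i

/-- The standard symplectic form on `k^n ⊕ k^n`:
`ω((x,z),(x',z')) = ⟨x,z'⟩ − ⟨z,x'⟩`. -/
def sf {n : ℕ} (v w : (Fin n → k) × (Fin n → k)) : k :=
  dot v.1 w.2 - dot v.2 w.1

lemma dot_neg_left {n : ℕ} (v w : Fin n → k) : dot (-v) w = -dot v w := by
  simp [dot, Finset.sum_neg_distrib]

lemma dot_neg_right {n : ℕ} (v w : Fin n → k) : dot v (-w) = -dot v w := by
  simp [dot, Finset.sum_neg_distrib]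

lemma dot_zero_left {n : ℕ} (w : Fin n → k) : dot (0 : Fin n → k) w = 0 := by
  simp [dot]

lemma dot_zero_right {n : ℕ} (v : Fin n → k) : dot v (0 : Fin n → k) = 0 := by
  simp [dot]

lemma dot_single {n : ℕ} (v : Fin n → k) (i : Fin n) :
    dot v (Pi.single i 1) = v i := by
  unfold dot
  rw [Finset.sum_eq_single i]
  · simp
  · intro j _ hj; simp [Pi.single_apply, hj]
  · simp

lemma eq_of_dot {n : ℕ} (v w : Fin n → k) (h : ∀ u, dot v u = dot w u) : v = w := by
  funext i
  have := h (Pi.single i 1)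
  simpa [dot_single] using this

/-- The cap `η = {((x,z),(x,−z)) : x, z ∈ k^n}` is a Lagrangian subspace of
`(k^n ⊕ k^n) × (k^n ⊕ k^n)` for the direct-sum symplectic form
`(ω ⊕ ω)(p,q) = ω(p₁,q₁) + ω(p₂,q₂)`: it equals its orthogonal complement. -/
theorem statement7 (n : ℕ) :
    ∀ p : ((Fin n → k) × (Fin n → k)) × ((Fin n → k) × (Fin n → k)),
      (∃ x z : Fin n → k, p = ((x, z), (x, -z))) ↔
        ∀ q : ((Fin n → k) × (Fin n → k)) × ((Fin n → k) × (Fin n → k)),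
          (∃ x z : Fin n → k, q = ((x, z), (x, -z))) →
            sf p.1 q.1 + sf p.2 q.2 = 0 := by
  rintro ⟨⟨a, b⟩, ⟨c, d⟩⟩
  constructor
  · rintro ⟨x, z, h⟩ q ⟨u, w, hq⟩
    obtain ⟨⟨h1, h2⟩, h3, h4⟩ : (a = x ∧ b = z) ∧ c = x ∧ d = -z := by
      simpa [Prod.ext_iff] using h
    subst h1 h2 h3 h4 hq
    simp [sf, dot_neg_left, dot_neg_right]
  · intro h
    refine ⟨a, b, ?_⟩
    have hac : a = c := by
      apply eq_of_dot
      intro u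
      have := h ((0, u), (0, -u)) ⟨0, u, rfl⟩
      simp [sf, dot_neg_right, dot_zero_right] at this
      linear_combination this
    have hbd : d = -b := by
      apply eq_of_dot
      intro u
      have := h ((u, 0), (u, 0)) ⟨u, 0, by simp⟩
      simp [sf, dot_zero_right] at this
      rw [dot_neg_left]
      linear_combination -this
    rw [hac, hbd]

end Statement7
end

section
/- Let k be a field, n, m natural numbers, and V ≤ k^n × k^m a linear subspace (a linear relation from k^n to k^m). Let V^⊥ = {(a,b) ∈ k^n × k^m : ⟨a,x⟩ = ⟨b,y⟩ for all (x,y) ∈ V} be its covariant orthogonal complement. Then the doubled relation L(V) = {((x,z),(y,w)) ∈ (k^n ⊕ k^n) × (k^m ⊕ k^m) : (x,y) ∈ V ∧ (z,w) ∈ V^⊥} is Lagrangian with respect to the relation form Ω_{n,m}(((x,z),(y,w)),((x',z'),(y',w'))) = ω_m((y,w),(y',w')) − ω_n((x,z),(x',z')), where ω_n, ω_m are the standard symplectic forms. -/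
/-!
Regroup `p = ((x,z),(y,w))` as `(u, u') = ((x,y),(z,w))`. Then the relation form becomes
`Ω(p,q) = B(u',v) − B(u,v')` for the symmetric nondegenerate form
`B((x,y),(a,b)) = ⟨x,a⟩ − ⟨y,b⟩` on `k^n × k^m`, and the `B`-orthogonal complement of `V` is
exactly the covariant `V^⊥`. So `L(V) = V × V^⊥` is isotropic on the nose, and it is coisotropic because
pairing `p` with `(0, v')` and with `(v, 0)` puts `u` in `V^⊥⊥ = V` and `u'` in `V^⊥`.
-/

namespace Statement8

variable {k : Type*} [Field k]

/-- Dot product on `k^n`. -/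
def dot {n : ℕ} (x y : Fin n → k) : k := ∑ i, x i * y i

/-- The standard symplectic form on `k^n ⊕ k^n`:
`ω((x,z),(x',z')) = ⟨x,z'⟩ − ⟨z,x'⟩`. -/
def sf {n : ℕ} (v w : (Fin n → k) × (Fin n → k)) : k :=
  dot v.1 w.2 - dot v.2 w.1

open LinearMap (BilinForm)
open Matrix

section Lagrangian

variable {K E : Type*} [Field K] [AddCommGroup E] [Module K E] [FiniteDimensional K E]

theorem prod_orthogonal_isLagrangian {B : BilinForm K E} (hB : B.IsSymm) (hB' : B.Nondegenerate)
    (V : Submodule K E) (w : E × E) :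
    (w.1 ∈ V ∧ w.2 ∈ B.orthogonal V) ↔
      ∀ w' : E × E, (w'.1 ∈ V ∧ w'.2 ∈ B.orthogonal V) → B w.2 w'.1 - B w.1 w'.2 = 0 := by
  constructor
  · rintro ⟨hw₁, hw₂⟩ w' ⟨hw'₁, hw'₂⟩
    rw [hB.eq, hw₂ _ hw'₁, hw'₂ _ hw₁, sub_zero]
  · intro h
    refine ⟨?_, fun v hv => ?_⟩
    · rw [← BilinForm.orthogonal_orthogonal hB' hB.isRefl V]
      intro v' hv'
      simpa [hB.eq v'] using h (0, v') ⟨V.zero_mem, hv'⟩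
    · simpa [hB.eq v] using h (v, 0) ⟨hv, (B.orthogonal V).zero_mem⟩

end Lagrangian

section RelationForm

theorem dot_eq_dotProduct {n : ℕ} (x y : Fin n → k) : dot x y = x ⬝ᵥ y := rfl

variable (k) in
noncomputable def relForm (n m : ℕ) : BilinForm k ((Fin n → k) × (Fin m → k)) :=
  (dotProductBilin k k).compl₁₂ (LinearMap.fst k _ _) (LinearMap.fst k _ _) -
    (dotProductBilin k k).compl₁₂ (LinearMap.snd k _ _) (LinearMap.snd k _ _)

variable {n m : ℕ}

theorem relForm_apply (v w : (Fin n → k) × (Fin m → k)) :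
    relForm k n m v w = dot v.1 w.1 - dot v.2 w.2 := rfl

theorem relForm_isSymm : (relForm k n m).IsSymm :=
  ⟨fun v w => by
    simp only [relForm_apply, dot_eq_dotProduct, dotProduct_comm v.1, dotProduct_comm v.2]⟩

theorem relForm_nondegenerate : (relForm k n m).Nondegenerate := by
  refine .ofSeparatingLeft fun v hv => ?_
  ext1
  · exact dotProduct_eq_zero _ fun x => by
      simpa [relForm_apply, dot_eq_dotProduct] using hv (x, 0)
  · exact dotProduct_eq_zero _ fun y => by
      simpa [relForm_apply, dot_eq_dotProduct] using hv (0, y)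

theorem mem_relForm_orthogonal_iff {V : Submodule k ((Fin n → k) × (Fin m → k))}
    {w : (Fin n → k) × (Fin m → k)} :
    w ∈ (relForm k n m).orthogonal V ↔ ∀ q ∈ V, dot w.1 q.1 = dot w.2 q.2 := by
  simp only [BilinForm.mem_orthogonal_iff, relForm_apply, sub_eq_zero,
    dot_eq_dotProduct, dotProduct_comm _ w.1, dotProduct_comm _ w.2]

theorem sf_sub_sf_eq_relForm (p q : ((Fin n → k) × (Fin n → k)) × ((Fin m → k) × (Fin m → k))) :
    sf p.2 q.2 - sf p.1 q.1 =
      relForm k n m (p.1.2, p.2.2) (q.1.1, q.2.1) - relForm k n m (p.1.1, p.2.1) (q.1.2, q.2.2) := by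
  simp only [sf, relForm_apply]
  ring

end RelationForm

/-- The doubled relation
`L(V) = {((x,z),(y,w)) : (x,y) ∈ V ∧ (z,w) ∈ V^⊥}` of a linear relation
`V ≤ k^n × k^m` is Lagrangian with respect to the relation form
`Ω(p,q) = ω_m(p₂,q₂) − ω_n(p₁,q₁)`, where
`V^⊥ = {(a,b) : ⟨a,x⟩ = ⟨b,y⟩ for all (x,y) ∈ V}` is the covariant orthogonal
complement. -/
theorem statement8 (n m : ℕ) (V : Submodule k ((Fin n → k) × (Fin m → k))) :
    ∀ p : ((Fin n → k) × (Fin n → k)) × ((Fin m → k) × (Fin m → k)),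
      ((p.1.1, p.2.1) ∈ V ∧ ∀ q ∈ V, dot p.1.2 q.1 = dot p.2.2 q.2) ↔
        ∀ q : ((Fin n → k) × (Fin n → k)) × ((Fin m → k) × (Fin m → k)),
          ((q.1.1, q.2.1) ∈ V ∧ ∀ r ∈ V, dot q.1.2 r.1 = dot q.2.2 r.2) →
            sf p.2 q.2 - sf p.1 q.1 = 0 := by
  intro p
  have key := prod_orthogonal_isLagrangian relForm_isSymm relForm_nondegenerate V
    (Equiv.prodProdProdComm _ _ _ _ p)
  rw [← (Equiv.prodProdProdComm _ _ _ _).forall_congr_right] at key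
  simpa only [mem_relForm_orthogonal_iff, sf_sub_sf_eq_relForm, Equiv.prodProdProdComm_apply]
    using key

end Statement8
end

section
/- Let k be a field and n, m natural numbers. The doubling map is injective on linear relations: if V, V' ≤ k^n × k^m are linear subspaces with L(V) = L(V'), where L(V) = {((x,z),(y,w)) ∈ (k^n ⊕ k^n) × (k^m ⊕ k^m) : (x,y) ∈ V ∧ (z,w) ∈ V^⊥}, then V = V'. -/
namespace Statement9

variable {k : Type*} [Field k]

/-- Dot product on `k^n`. -/
def dot {n : ℕ} (x y : Fin n → k) : k := ∑ i, x i * y i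

/-- The doubled relation of a linear relation `V ≤ k^n × k^m`:
`L(V) = {((x,z),(y,w)) : (x,y) ∈ V ∧ (z,w) ∈ V^⊥}` where
`V^⊥ = {(a,b) : ⟨a,x⟩ = ⟨b,y⟩ for all (x,y) ∈ V}`. -/
def LSet {n m : ℕ} (V : Submodule k ((Fin n → k) × (Fin m → k))) :
    Set (((Fin n → k) × (Fin n → k)) × ((Fin m → k) × (Fin m → k))) :=
  {p | (p.1.1, p.2.1) ∈ V ∧ ∀ q ∈ V, dot p.1.2 q.1 = dot p.2.2 q.2}

/-- The doubling map `V ↦ L(V)` is injective on linear relations. -/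
theorem statement9 (n m : ℕ)
    (V V' : Submodule k ((Fin n → k) × (Fin m → k)))
    (h : LSet V = LSet V') : V = V' := by
  have key : ∀ (W W' : Submodule k ((Fin n → k) × (Fin m → k))),
      LSet W = LSet W' → W ≤ W' := by
    intro W W' hWW p hp
    have : ((p.1, 0), (p.2, 0)) ∈ LSet W := by
      refine ⟨hp, ?_⟩
      intro q hq
      simp [dot]
    rw [hWW] at this
    exact this.1
  exact le_antisymm (key V V' h) (key V' V h.symm)

end Statement9
end

section
/- Let k be a field and n, m, l natural numbers. For linear subspaces R ≤ k^n × k^m and S ≤ k^m × k^l, the covariant orthogonal complement is functorial with respect to relational composition: (S ∘ R)^⊥ = S^⊥ ∘ R^⊥, where S ∘ R = {(x,z) : ∃ y ∈ k^m, (x,y) ∈ R ∧ (y,z) ∈ S} and V^⊥ = {(a,b) : ⟨a,x⟩ = ⟨b,y⟩ for all (x,y) ∈ V}. -/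
set_option synthInstance.maxHeartbeats 800000

namespace Statement10

variable {k : Type*} [Field k]

/-- Dot product on `k^n`. -/
def dot {n : ℕ} (x y : Fin n → k) : k := ∑ i, x i * y i

/-- The covariant orthogonal complement of a (set-theoretic) relation
`V ⊆ k^a × k^b`: `V^⊥ = {(x,y) : ⟨x,q₁⟩ = ⟨y,q₂⟩ for all (q₁,q₂) ∈ V}`. -/
def perp {a b : ℕ} (V : Set ((Fin a → k) × (Fin b → k))) :
    Set ((Fin a → k) × (Fin b → k)) :=
  {p | ∀ q ∈ V, dot p.1 q.1 = dot p.2 q.2}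

/-- `dot x -` as a linear map. -/
def dotL {n : ℕ} (x : Fin n → k) : (Fin n → k) →ₗ[k] k where
  toFun y := dot x y
  map_add' y z := by simp [dot, mul_add, Finset.sum_add_distrib]
  map_smul' c y := by simp [dot, Finset.mul_sum, mul_left_comm]

/-- A single-valued linear relation into `k` is the graph of a linear functional
(after extending to the whole space). -/
lemma graph_functional {V : Type*} [AddCommGroup V] [Module k V]
    (T : Submodule k (V × k)) (hT : ∀ c : k, ((0 : V), c) ∈ T → c = 0) :
    ∃ g : V →ₗ[k] k, ∀ p ∈ T, g p.1 = p.2 := by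
  set p₁ : ↥T →ₗ[k] V := (LinearMap.fst k V k).comp T.subtype
  set p₂ : ↥T →ₗ[k] k := (LinearMap.snd k V k).comp T.subtype
  have hker : ∀ t : ↥T, p₁ t = 0 → p₂ t = 0 := by
    intro t ht
    have := hT (p₂ t) (by
      have : ((t : V × k).1, (t : V × k).2) ∈ T := by simpa using t.2
      simpa [p₁, p₂, ← ht] using this)
    simpa using this
  obtain ⟨σ, hσ⟩ := p₁.rangeRestrict.exists_rightInverse_of_surjective
    p₁.range_rangeRestrict
  obtain ⟨g, hg⟩ := LinearMap.exists_extend (p₂.comp σ)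
  refine ⟨g, ?_⟩
  rintro ⟨w, c⟩ hp
  set t : ↥T := ⟨(w, c), hp⟩
  have hw : w ∈ LinearMap.range p₁ := ⟨t, rfl⟩
  have h1 : p₁ (σ ⟨w, hw⟩) = w := by
    have := congrArg (fun f => ((LinearMap.range p₁).subtype.comp f) ⟨w, hw⟩)
      hσ
    simpa [LinearMap.rangeRestrict] using congrArg Subtype.val
      (LinearMap.congr_fun hσ ⟨w, hw⟩)
  have h2 : p₂ (σ ⟨w, hw⟩) = p₂ t := by
    have := hker (σ ⟨w, hw⟩ - t) (by simp [h1, map_sub, p₁, t])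
    have h3 : p₂ (σ ⟨w, hw⟩) - p₂ t = 0 := by simpa [map_sub] using this
    exact sub_eq_zero.mp h3
  have h4 : g w = p₂ (σ ⟨w, hw⟩) := by
    have := LinearMap.congr_fun hg ⟨w, hw⟩
    simpa using this
  have h5 : p₂ t = c := rfl
  rw [h4, h2, h5]


lemma dot_repr {m : ℕ} (g : (Fin m → k) →ₗ[k] k) (y : Fin m → k) :
    dot (fun i => g (Pi.single i 1)) y = g y := by
  have hy : y = ∑ i, (y i) • (Pi.single i (1:k) : Fin m → k) := by
    simp [← Pi.single_smul, Finset.univ_sum_single]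
  conv_rhs => rw [hy]
  rw [map_sum]
  simp [dot, mul_comm]

/-- The covariant orthogonal complement is functorial for relational
composition: `(S ∘ R)^⊥ = S^⊥ ∘ R^⊥`. -/
theorem statement10 (n m l : ℕ)
    (R : Submodule k ((Fin n → k) × (Fin m → k)))
    (S : Submodule k ((Fin m → k) × (Fin l → k))) :
    perp {p : (Fin n → k) × (Fin l → k) |
        ∃ y : Fin m → k, (p.1, y) ∈ R ∧ (y, p.2) ∈ S} =
      {p : (Fin n → k) × (Fin l → k) |
        ∃ b : Fin m → k, (p.1, b) ∈ perp (R : Set _) ∧ (b, p.2) ∈ perp (S : Set _)} := by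
  ext ⟨x, z⟩
  constructor
  · intro hp
    set L₁ : ((Fin n → k) × (Fin m → k)) →ₗ[k] ((Fin m → k) × k) :=
      (LinearMap.snd k _ _).prod ((dotL x).comp (LinearMap.fst k _ _)) with hL₁
    set L₂ : ((Fin m → k) × (Fin l → k)) →ₗ[k] ((Fin m → k) × k) :=
      (LinearMap.fst k _ _).prod ((dotL z).comp (LinearMap.snd k _ _)) with hL₂
    set T : Submodule k ((Fin m → k) × k) := (R.map L₁) ⊔ (S.map L₂) with hTdef
    have hT : ∀ c : k, ((0 : Fin m → k), c) ∈ T → c = 0 := by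
      intro c hc
      rw [hTdef, Submodule.mem_sup] at hc
      obtain ⟨u, hu, v, hv, huv⟩ := hc
      obtain ⟨r, hr, rfl⟩ := hu
      obtain ⟨s, hs, rfl⟩ := hv
      have h1 : r.2 + s.1 = 0 := congrArg Prod.fst huv
      have h2 : dot x r.1 + dot z s.2 = c := congrArg Prod.snd huv
      have hmem : ((r.1, -s.2) : (Fin n → k) × (Fin l → k)) ∈
          {p : (Fin n → k) × (Fin l → k) |
            ∃ y : Fin m → k, (p.1, y) ∈ R ∧ (y, p.2) ∈ S} := by
        refine ⟨r.2, by simpa using hr, ?_⟩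
        have : ((-s.1, -s.2) : _ × _) ∈ S := by
          rw [show ((-s.1, -s.2) : _ × _) = -s from rfl]; exact S.neg_mem hs
        have hr2 : r.2 = -s.1 := by
          rw [eq_neg_iff_add_eq_zero]; exact h1
        rw [hr2]; exact this
      have := hp _ hmem
      have hneg : dot z (-s.2) = -(dot z s.2) := (dotL z).map_neg s.2
      simp only [hneg] at this
      have : dot x r.1 = -(dot z s.2) := this
      rw [this] at h2
      rw [neg_add_cancel] at h2; exact h2.symm
    obtain ⟨g, hg⟩ := graph_functional T hT
    refine ⟨fun i => g (Pi.single i 1), ?_, ?_⟩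
    · rintro ⟨q₁, q₂⟩ hq
      show dot x q₁ = dot _ q₂
      rw [dot_repr]
      exact (hg (q₂, dot x q₁)
        (Submodule.mem_sup_left (Submodule.mem_map_of_mem hq))).symm
    · rintro ⟨q₂, q₃⟩ hq
      show dot _ q₂ = dot z q₃
      rw [dot_repr]
      exact hg (q₂, dot z q₃)
        (Submodule.mem_sup_right (Submodule.mem_map_of_mem hq))
  · rintro ⟨b, hb1, hb2⟩ ⟨q₁, q₃⟩ ⟨y, hR, hS⟩
    exact (hb1 (q₁, y) hR).trans (hb2 (y, q₃) hS)

end Statement10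
end

section
/- Let k be a field, n a natural number, and W a Lagrangian subspace of k^n ⊕ k^n with respect to the standard symplectic form. Then there exist a subset S ⊆ Fin n and a symmetric n × n matrix Z over k such that F_S(W) = {(x, Z x) : x ∈ k^n}, where F_S is the linear symplectomorphism of k^n ⊕ k^n that for each i ∈ S replaces the coordinates (xᵢ, zᵢ) by (zᵢ, −xᵢ) and leaves all coordinates with index not in S unchanged. In other words, every Lagrangian subspace can be brought to graph-state form by a partial Fourier transform. -/
/-!
Let `U` be the projection of `W` to the first factor and choose a coordinate subspace `E_S`
complementary to `U`. The Lagrangian `F_S W` meets the vertical `0 × kⁿ` trivially: a vertical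
vector of it comes from some `(x, z) ∈ W` with `x ∈ U ∩ E_S = 0`, and then `z` is orthogonal to
`U` (because `W` is Lagrangian) and to `E_S` (by the shape of `F_S`), hence to everything.
A Lagrangian transverse to the vertical projects onto `kⁿ`, since a vector orthogonal to the
projection yields a vertical vector in it; so it is the graph of a linear map, whose matrix is
symmetric because the symplectic form vanishes on the graph.
-/

namespace Statement12

variable {k : Type*} [Field k]

/-- Dot product on `k^n`. -/
def dot {n : ℕ} (x y : Fin n → k) : k := ∑ i, x i * y i

/-- The standard symplectic form on `k^n ⊕ k^n`:
`ω((x,z),(x',z')) = ⟨x,z'⟩ − ⟨z,x'⟩`. -/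
def sf {n : ℕ} (v w : (Fin n → k) × (Fin n → k)) : k :=
  dot v.1 w.2 - dot v.2 w.1

/-- The partial Fourier transform `F_S` on `k^n ⊕ k^n`: for each `i ∈ S` it
replaces the coordinates `(xᵢ, zᵢ)` by `(zᵢ, −xᵢ)` and leaves coordinates with
index not in `S` unchanged. -/
def FS {n : ℕ} (S : Finset (Fin n)) :
    ((Fin n → k) × (Fin n → k)) → ((Fin n → k) × (Fin n → k)) :=
  fun p => (fun i => if i ∈ S then p.2 i else p.1 i,
            fun i => if i ∈ S then -p.1 i else p.2 i)

open Submodule Matrix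

theorem _root_.Module.Basis.exists_isCompl_span_image {K V ι : Type*} [DivisionRing K]
    [AddCommGroup V] [Module K V] [Finite ι] (b : Module.Basis ι K V) (U : Submodule K V) :
    ∃ S : Finset ι, IsCompl U (span K (b '' S)) := by
  classical
  obtain ⟨S, -, hS⟩ := Finite.exists_le_maximal
    (p := fun S : Finset ι => Disjoint U (span K (b '' S))) (a := ∅) (by simp)
  refine ⟨S, hS.prop, codisjoint_iff.2 (eq_top_iff.2 ?_)⟩
  rw [← b.span_eq, span_le]
  rintro _ ⟨i, rfl⟩
  by_contra hi
  have hins : Disjoint U (span K (b '' ↑(insert i S))) := by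
    rw [Finset.coe_insert, Set.image_insert_eq, span_insert, sup_comm]
    exact hS.prop.disjoint_sup_right_of_disjoint_sup_left
      ((disjoint_span_singleton' (b.ne_zero i)).2 hi)
  have hiS : i ∈ S := hS.eq_of_le hins (Finset.subset_insert i S) ▸ Finset.mem_insert_self i S
  exact hi (mem_sup_right (subset_span (Set.mem_image_of_mem b hiS)))

theorem _root_.Pi.mem_span_basisFun_image_iff {K ι : Type*} [Semiring K] [Finite ι] {S : Set ι}
    {x : ι → K} : x ∈ span K (Pi.basisFun K ι '' S) ↔ ∀ i ∉ S, x i = 0 := by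
  simp [Module.Basis.mem_span_image, Set.subset_def, not_imp_comm]

theorem _root_.Submodule.eq_top_of_forall_dotProduct_eq_zero {K ι : Type*} [Field K]
    [Fintype ι] {U : Submodule K (ι → K)} (h : ∀ z, (∀ u ∈ U, z ⬝ᵥ u = 0) → z = 0) : U = ⊤ := by
  classical
  rw [← dualAnnihilator_eq_bot_iff, eq_bot_iff]
  intro f hf
  have hz := h ((dotProductEquiv K ι).symm f) fun u hu => by
    rw [← dotProductEquiv_apply_apply, LinearEquiv.apply_symm_apply]
    exact (mem_dualAnnihilator f).1 hf u hu
  simpa using hz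

variable {n : ℕ}

def IsLagrangian (W : Submodule k ((Fin n → k) × (Fin n → k))) : Prop :=
  ∀ v, v ∈ W ↔ ∀ w ∈ W, sf v w = 0

theorem sf_eq_dotProduct (v w : (Fin n → k) × (Fin n → k)) :
    sf v w = v.1 ⬝ᵥ w.2 - v.2 ⬝ᵥ w.1 := rfl

theorem sf_FS (S : Finset (Fin n)) (v w : (Fin n → k) × (Fin n → k)) :
    sf (FS S v) (FS S w) = sf v w := by
  simp only [sf, dot, FS, ← Finset.sum_sub_distrib]
  refine Finset.sum_congr rfl fun i _ => ?_
  split_ifs <;> ring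

def fourierEquiv (S : Finset (Fin n)) :
    ((Fin n → k) × (Fin n → k)) ≃ₗ[k] ((Fin n → k) × (Fin n → k)) where
  toFun := FS S
  invFun p := (fun i => if i ∈ S then -p.2 i else p.1 i,
                fun i => if i ∈ S then p.1 i else p.2 i)
  map_add' p q := by ext i <;> by_cases hi : i ∈ S <;> simp [FS, hi, add_comm]
  map_smul' c p := by ext i <;> by_cases hi : i ∈ S <;> simp [FS, hi]
  left_inv p := by ext i <;> by_cases hi : i ∈ S <;> simp [FS, hi]
  right_inv p := by ext i <;> by_cases hi : i ∈ S <;> simp [FS, hi]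

@[simp]
theorem fourierEquiv_apply (S : Finset (Fin n)) (p : (Fin n → k) × (Fin n → k)) :
    fourierEquiv S p = FS S p := rfl

theorem IsLagrangian.map {W : Submodule k ((Fin n → k) × (Fin n → k))} (hW : IsLagrangian W)
    (e : ((Fin n → k) × (Fin n → k)) ≃ₗ[k] ((Fin n → k) × (Fin n → k)))
    (he : ∀ v w, sf (e v) (e w) = sf v w) : IsLagrangian (W.map e.toLinearMap) := by
  intro v
  rw [mem_map_equiv, hW]
  constructor
  · intro h w hw
    rw [mem_map_equiv] at hw
    have := h _ hw
    rwa [← he, e.apply_symm_apply, e.apply_symm_apply] at this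
  · intro h w hw
    rw [← he, e.apply_symm_apply]
    exact h _ (mem_map_of_mem hw)

theorem IsLagrangian.mk_zero_mem_iff {W : Submodule k ((Fin n → k) × (Fin n → k))}
    (hW : IsLagrangian W) {z : Fin n → k} :
    ((0 : Fin n → k), z) ∈ W ↔ ∀ u ∈ W.map (LinearMap.fst k _ _), z ⬝ᵥ u = 0 := by
  rw [hW (0, z)]
  constructor
  · rintro h _ ⟨⟨u, c⟩, hu, rfl⟩
    simpa [sf_eq_dotProduct] using h _ hu
  · rintro h ⟨u, c⟩ hu
    simpa [sf_eq_dotProduct] using h u (mem_map_of_mem hu)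

theorem IsLagrangian.exists_isSymm_eq_graph {W : Submodule k ((Fin n → k) × (Fin n → k))}
    (hW : IsLagrangian W) (hsnd : ∀ y, ((0 : Fin n → k), y) ∈ W → y = 0) :
    ∃ Z : Matrix (Fin n) (Fin n) k, Z.IsSymm ∧ W = (Matrix.toLin' Z).graph := by
  have hfst : W.map (LinearMap.fst k _ _) = ⊤ :=
    eq_top_of_forall_dotProduct_eq_zero fun z hz => hsnd z (hW.mk_zero_mem_iff.2 hz)
  have hinj : Function.Injective (Prod.fst ∘ W.subtype) := by
    rintro ⟨⟨x, y⟩, h⟩ ⟨⟨x', y'⟩, h'⟩ (rfl : x = x')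
    have hy : ((0 : Fin n → k), y - y') ∈ W := by simpa using W.sub_mem h h'
    exact Subtype.ext (Prod.ext rfl (sub_eq_zero.1 (hsnd _ hy)))
  have hsurj : Function.Surjective (Prod.fst ∘ W.subtype) := by
    intro x
    obtain ⟨⟨x, y⟩, h, rfl⟩ := mem_map.1 (hfst ▸ mem_top : x ∈ W.map (LinearMap.fst k _ _))
    exact ⟨⟨_, h⟩, rfl⟩
  obtain ⟨T, rfl⟩ := W.exists_eq_graph ⟨hinj, hsurj⟩
  refine ⟨LinearMap.toMatrix' T, ?_, by rw [Matrix.toLin'_toMatrix']⟩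
  ext i j
  have h := (hW _).1 ((T.mem_graph_iff (Pi.single j 1, T (Pi.single j 1))).2 rfl)
    _ ((T.mem_graph_iff (Pi.single i 1, T (Pi.single i 1))).2 rfl)
  simpa [sf_eq_dotProduct, LinearMap.toMatrix'_apply, sub_eq_zero] using h

theorem IsLagrangian.eq_zero_of_mk_zero_mem_map_fourierEquiv
    {W : Submodule k ((Fin n → k) × (Fin n → k))} (hW : IsLagrangian W) {S : Finset (Fin n)}
    (hS : IsCompl (W.map (LinearMap.fst k _ _)) (span k (Pi.basisFun k (Fin n) '' S)))
    {y : Fin n → k} (hy : ((0 : Fin n → k), y) ∈ W.map (fourierEquiv S).toLinearMap) :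
    y = 0 := by
  obtain ⟨⟨x, z⟩, hxz, hFS⟩ := mem_map.1 hy
  obtain ⟨hFS₁, hFS₂⟩ : (∀ i, (if i ∈ S then z i else x i) = 0) ∧
      ∀ i, (if i ∈ S then -x i else z i) = y i := by
    simpa [FS, funext_iff] using hFS
  have hx : x = 0 := by
    refine disjoint_def.1 hS.disjoint x (mem_map_of_mem hxz)
      (Pi.mem_span_basisFun_image_iff.2 fun i hi => ?_)
    simpa [show i ∉ S from hi] using hFS₁ i
  subst hx
  have hz : z = 0 := by
    refine dotProduct_eq_zero z fun u => ?_
    obtain ⟨a, ha, e, he, rfl⟩ := mem_sup.1 (hS.sup_eq_top ▸ mem_top : u ∈ _ ⊔ _)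
    rw [dotProduct_add, hW.mk_zero_mem_iff.1 hxz a ha, zero_add]
    refine Finset.sum_eq_zero fun i _ => ?_
    by_cases hi : i ∈ S
    · rw [show z i = 0 by simpa [hi] using hFS₁ i, zero_mul]
    · rw [Pi.mem_span_basisFun_image_iff.1 he i hi, mul_zero]
  ext i
  simpa [hz] using (hFS₂ i).symm

/-- Every Lagrangian subspace of `k^n ⊕ k^n` can be brought to graph-state
form `{(x, Z x) : x ∈ k^n}`, with `Z` symmetric, by a partial Fourier
transform `F_S`. -/
theorem statement12 (n : ℕ) (W : Submodule k ((Fin n → k) × (Fin n → k)))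
    (hW : ∀ v : (Fin n → k) × (Fin n → k), v ∈ W ↔ ∀ w ∈ W, sf v w = 0) :
    ∃ (S : Finset (Fin n)) (Z : Matrix (Fin n) (Fin n) k),
      Z.transpose = Z ∧
        FS S '' (W : Set ((Fin n → k) × (Fin n → k))) =
          {p : (Fin n → k) × (Fin n → k) | ∃ x : Fin n → k, p = (x, Z.mulVec x)} := by
  obtain ⟨S, hS⟩ :=
    (Pi.basisFun k (Fin n)).exists_isCompl_span_image (W.map (LinearMap.fst k _ _))
  obtain ⟨Z, hZ, hgraph⟩ :=
    (IsLagrangian.map hW (fourierEquiv S) (sf_FS S)).exists_isSymm_eq_graph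
      fun y hy => IsLagrangian.eq_zero_of_mk_zero_mem_map_fourierEquiv hW hS hy
  refine ⟨S, Z, hZ, ?_⟩
  have hFS : FS S '' (W : Set ((Fin n → k) × (Fin n → k))) =
      W.map (fourierEquiv S).toLinearMap := by
    rw [map_coe]
    rfl
  rw [hFS, hgraph]
  ext ⟨x, y⟩
  simp [LinearMap.mem_graph_iff]

end Statement12
end

section
/- Let k be a field, n a natural number, and W a Lagrangian subspace of k^n ⊕ k^n with respect to the standard symplectic form ω. Then there exists a linear equivalence g : k^n ⊕ k^n ≃ k^n ⊕ k^n preserving ω (i.e. ω(g u, g v) = ω(u,v) for all u,v) such that W is the image under g of the standard Lagrangian subspace {(x, 0) : x ∈ k^n}. That is, every Lagrangian subspace can be reduced to the standard one by a symplectomorphism. -/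
/-!
A Lagrangian subspace `W` is its own `ω`-orthogonal, so `dim W = n` by nondegeneracy. Take a basis
`e` of `W`. Nondegeneracy gives `f` with `ω(eᵢ, fⱼ) = δᵢⱼ`; replacing `fᵢ` by
`fᵢ - ∑_{j < i} ω(fᵢ, fⱼ) eⱼ` also makes `ω(fᵢ, fⱼ) = 0`, in any characteristic. Then
`(x, z) ↦ ∑ xᵢ eᵢ + ∑ zᵢ fᵢ` pulls `ω` back to itself, hence is injective and so an automorphism,
and it maps `{z = 0}` onto the span of the `eᵢ`, which is `W`.
-/

namespace Statement13

variable {k : Type*} [Field k]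

/-- Dot product on `k^n`. -/
def dot {n : ℕ} (x y : Fin n → k) : k := ∑ i, x i * y i

/-- The standard symplectic form on `k^n ⊕ k^n`:
`ω((x,z),(x',z')) = ⟨x,z'⟩ − ⟨z,x'⟩`. -/
def sf {n : ℕ} (v w : (Fin n → k) × (Fin n → k)) : k :=
  dot v.1 w.2 - dot v.2 w.1

open Module
open LinearMap (BilinForm)

section

variable {V ι : Type*} [AddCommGroup V] [Module k V]

theorem _root_.Module.Basis.sumExtend_inl {e : ι → V} (he : LinearIndependent k e) (i : ι) :
    Basis.sumExtend he (Sum.inl i) = e i := by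
  rw [Basis.sumExtend, Basis.reindex_apply, Basis.coe_extend]
  rfl

theorem two_mul_finrank_eq_of_orthogonal_eq_self [FiniteDimensional k V] {B : BilinForm k V}
    (hB : B.Nondegenerate) {W : Submodule k V} (hW : B.orthogonal W = W) :
    2 * finrank k W = finrank k V := by
  have h := B.finrank_orthogonal hB W
  rw [hW] at h
  have := Submodule.finrank_le W
  omega

theorem injective_of_apply_apply_eq {V' : Type*} [AddCommGroup V'] [Module k V']
    {B : BilinForm k V} {B' : BilinForm k V'} (hB : B.Nondegenerate) {φ : V →ₗ[k] V'} (hφ : ∀ u v, B' (φ u) (φ v) = B u v) :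
    Function.Injective φ := by
  refine (injective_iff_map_eq_zero φ).2 fun u hu => hB.1 u fun v => ?_
  rw [← hφ, hu, map_zero, LinearMap.zero_apply]

structure IsDarboux [DecidableEq ι] (B : BilinForm k V) (e f : ι → V) : Prop where
  isotropic_left : ∀ i j, B (e i) (e j) = 0
  apply_left_right : ∀ i j, B (e i) (f j) = if i = j then 1 else 0
  isotropic_right : ∀ i j, B (f i) (f j) = 0

theorem exists_apply_eq_ite [FiniteDimensional k V] [DecidableEq ι] {B : BilinForm k V}
    (hB : B.Nondegenerate) {e : ι → V} (he : LinearIndependent k e) :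
    ∃ f : ι → V, ∀ i j, B (e i) (f j) = if i = j then 1 else 0 := by
  classical
  -- `f j` represents, through `B`, the `j`-th coordinate of a basis extending `e`.
  refine ⟨fun j => (B.flip.toDual hB.flip).symm ((Basis.sumExtend he).coord (Sum.inl j)),
    fun i j => ?_⟩
  rw [← B.flip_apply, LinearMap.BilinForm.apply_toDual_symm_apply, ← Basis.sumExtend_inl he,
    Basis.coord_apply, Basis.repr_self, Finsupp.single_apply]
  simp

theorem exists_isDarboux_of_apply_eq_ite [Fintype ι] [LinearOrder ι] {B : BilinForm k V}
    (hB : LinearMap.IsAlt B) {e f : ι → V} (hee : ∀ i j, B (e i) (e j) = 0)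
    (hef : ∀ i j, B (e i) (f j) = if i = j then 1 else 0) : ∃ f', IsDarboux B e f' := by
  -- A triangular correction, so that no division by 2 is needed.
  let a : ι → ι → k := fun i j => if j < i then B (f i) (f j) else 0
  let f' : ι → V := fun i => f i - ∑ j, a i j • e j
  have hfe : ∀ i j, B (f i) (e j) = -if j = i then 1 else 0 := fun i j => by
    rw [← hef, hB.neg]
  have hef' : ∀ i j, B (e i) (f' j) = if i = j then 1 else 0 := fun i j => by
    simp [f', hee, hef]
  refine ⟨f', ⟨hee, hef', fun i j => ?_⟩⟩
  have hff' : B (f' i) (f' j) = B (f i) (f j) + a j i - a i j := by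
    simp [f', hfe, hee, hef]
  rw [hff']
  rcases lt_trichotomy i j with hij | rfl | hij
  · simp [a, hij, hij.not_gt, ← hB.neg (f j) (f i)]
  · simp [a, hB.self_eq_zero]
  · simp [a, hij, hij.not_gt]

theorem exists_isDarboux [FiniteDimensional k V] [Fintype ι] [LinearOrder ι] {B : BilinForm k V}
    (hB : LinearMap.IsAlt B) (hB' : B.Nondegenerate) {e : ι → V} (he : LinearIndependent k e)
    (hee : ∀ i j, B (e i) (e j) = 0) : ∃ f, IsDarboux B e f :=
  let ⟨_, hef⟩ := exists_apply_eq_ite hB' he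
  exists_isDarboux_of_apply_eq_ite hB hee hef

theorem IsDarboux.apply_right_left [DecidableEq ι] {B : BilinForm k V} (hB : LinearMap.IsAlt B)
    {e f : ι → V} (h : IsDarboux B e f) (i j : ι) :
    B (f i) (e j) = -if j = i then 1 else 0 := by
  rw [← hB.neg, h.apply_left_right]

noncomputable def darbouxMap {n : ℕ} (e f : Fin n → V) : (Fin n → k) × (Fin n → k) →ₗ[k] V :=
  (Fintype.linearCombination k e).coprod (Fintype.linearCombination k f)

theorem IsDarboux.apply_darbouxMap {n : ℕ} {B : BilinForm k V} (hB : LinearMap.IsAlt B)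
    {e f : Fin n → V} (h : IsDarboux B e f) (u v : (Fin n → k) × (Fin n → k)) :
    B (darbouxMap e f u) (darbouxMap e f v) = sf u v := by
  simp [darbouxMap, Fintype.linearCombination_apply, h.isotropic_left, h.apply_left_right,
    h.apply_right_left hB, h.isotropic_right, sf, dot, sub_eq_add_neg]

theorem image_darbouxMap_setOf_snd_eq_zero {n : ℕ} (e f : Fin n → V) :
    darbouxMap e f '' {p : (Fin n → k) × (Fin n → k) | p.2 = 0} =
      Submodule.span k (Set.range e) := by
  rw [← Fintype.range_linearCombination]
  ext v
  constructor
  · rintro ⟨p, hp, rfl⟩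
    exact ⟨p.1, by simp [darbouxMap, show p.2 = 0 from hp]⟩
  · rintro ⟨x, rfl⟩
    exact ⟨(x, 0), rfl, by simp [darbouxMap]⟩

end

noncomputable def sfForm (n : ℕ) : BilinForm k ((Fin n → k) × (Fin n → k)) :=
  (dotProductBilin k k).compl₁₂ (LinearMap.fst k _ _) (LinearMap.snd k _ _) -
    (dotProductBilin k k).compl₁₂ (LinearMap.snd k _ _) (LinearMap.fst k _ _)

theorem sfForm_apply {n : ℕ} (u v : (Fin n → k) × (Fin n → k)) : sfForm n u v = sf u v := rfl

theorem sfForm_isAlt (n : ℕ) : LinearMap.IsAlt (sfForm (k := k) n) := fun u => by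
  simp [sfForm_apply, sf, dot, mul_comm]

theorem sfForm_nondegenerate (n : ℕ) : (sfForm (k := k) n).Nondegenerate := by
  refine ((sfForm_isAlt n).isRefl).nondegenerate_iff_separatingLeft.2 fun u hu => ?_
  ext i
  · simpa [sfForm_apply, sf, dot, Pi.single_apply] using hu (0, Pi.single i 1)
  · simpa [sfForm_apply, sf, dot, Pi.single_apply] using hu (Pi.single i 1, 0)

/-- Every Lagrangian subspace of `k^n ⊕ k^n` is the image of the standard
Lagrangian subspace `{(x, 0) : x ∈ k^n}` under a linear symplectomorphism. -/
theorem statement13 (n : ℕ) (W : Submodule k ((Fin n → k) × (Fin n → k)))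
    (hW : ∀ v : (Fin n → k) × (Fin n → k), v ∈ W ↔ ∀ w ∈ W, sf v w = 0) :
    ∃ g : ((Fin n → k) × (Fin n → k)) ≃ₗ[k] ((Fin n → k) × (Fin n → k)),
      (∀ u v : (Fin n → k) × (Fin n → k), sf (g u) (g v) = sf u v) ∧
        (W : Set ((Fin n → k) × (Fin n → k))) =
          ⇑g '' {p : (Fin n → k) × (Fin n → k) | p.2 = 0} := by
  have hW_orth : (sfForm n).orthogonal W = W := by
    ext v
    rw [LinearMap.BilinForm.mem_orthogonal_iff, hW v]
    exact forall₂_congr fun w _ => (sfForm_isAlt n).isRefl.eq_iff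
  have hW_dim : finrank k W = n := by
    have := two_mul_finrank_eq_of_orthogonal_eq_self (sfForm_nondegenerate n) hW_orth
    simp only [finrank_prod, finrank_fin_fun] at this
    omega
  let bW := finBasisOfFinrankEq k W hW_dim
  let e : Fin n → (Fin n → k) × (Fin n → k) := W.subtype ∘ bW
  obtain ⟨f, hf⟩ := exists_isDarboux (sfForm_isAlt n) (sfForm_nondegenerate n)
    (bW.linearIndependent.map' W.subtype W.ker_subtype) (e := e)
    fun i j => (hW _).1 (bW i).2 _ (bW j).2
  have hsymp := hf.apply_darbouxMap (sfForm_isAlt n)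
  refine ⟨.ofInjectiveEndo (darbouxMap e f)
    (injective_of_apply_apply_eq (sfForm_nondegenerate n) hsymp), hsymp, ?_⟩
  rw [LinearEquiv.coe_ofInjectiveEndo, image_darbouxMap_setOf_snd_eq_zero, Set.range_comp,
    Submodule.span_image, bW.span_eq, Submodule.map_top, Submodule.range_subtype]

end Statement13
end

section
/- Purification of Lagrangian relations: Let k be a field, n, m natural numbers, and let L ≤ (k^n ⊕ k^n) × (k^m ⊕ k^m) be a Lagrangian relation, i.e. a subspace that is Lagrangian with respect to the relation form Ω_{n,m}(((x,z),(y,w)),((x',z'),(y',w'))) = ω_m((y,w),(y',w')) − ω_n((x,z),(x',z')). Then there exist a natural number r, a linear subspace V ≤ k^n × (k^m × k^r), and scalars a : Fin r → k such that L = {((x,z),(y,w)) : ∃ u, u' ∈ k^r, (x,(y,u)) ∈ V ∧ (z,(w,u')) ∈ V^⊥ ∧ ∀ i, u'ᵢ = aᵢ · uᵢ}, where V^⊥ = {(b,(c,v)) : ⟨b,x⟩ = ⟨c,y⟩ + ⟨v,u⟩ for all (x,(y,u)) ∈ V} is the covariant orthogonal complement of V regarded as a linear relation from k^n to k^m ×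 k^r. In other words, every Lagrangian relation is the relational composite of a doubled (pure) linear relation with discard relations d_{aᵢ} = {(u, aᵢ·u) : u ∈ k} on the extra doubled wires. -/
/-
Write a point of `L` as `p = (X, Z)` with covariant part `X = (x, y)` and contravariant part
`Z = (z, w)`. The relation form is then `Ω(p, q) = β(X_q, Z_p) - β(X_p, Z_q)` for the pairing
`β((x, y), (z, w)) = ⟨x, z⟩ - ⟨y, w⟩`, so a Lagrangian `L` is determined by its projection `P`
and the symmetric form `Q(X_p, X_q) = β(X_p, Z_q)` on `P`: `p ∈ L` iff `X_p ∈ P` and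
`β(Y, Z_p) = Q(X_p, Y)` for all `Y ∈ P`. In every characteristic a symmetric form is a weighted sum
`∑ aₗ fₗ ⊗ fₗ` of squares of linear functionals, by polarization
`f ⊗ g + g ⊗ f = (f + g) ⊗ (f + g) - f ⊗ f - g ⊗ g`. Taking for `V` the graph over `P` of
`X ↦ (fₗ X)ₗ`, the discard relations `d_{aₗ}` contribute exactly `∑ aₗ fₗ(X) fₗ(Y) = Q(X, Y)`
to the orthogonality condition.
-/

namespace Statement16

variable {k : Type*} [Field k]

/-- Dot product on `k^n`. -/
def dot {n : ℕ} (x y : Fin n → k) : k := ∑ i, x i * y i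

/-- The standard symplectic form on `k^n ⊕ k^n`:
`ω((x,z),(x',z')) = ⟨x,z'⟩ − ⟨z,x'⟩`. -/
def sf {n : ℕ} (v w : (Fin n → k) × (Fin n → k)) : k :=
  dot v.1 w.2 - dot v.2 w.1

section SumOfSquares

open Module

variable (k) (W : Type*) [AddCommGroup W] [Module k W]

def squareSpan : Submodule k (LinearMap.BilinForm k W) :=
  Submodule.span k (Set.range fun f : Dual k W => f.smulRight f)

variable {k W}

theorem smulRight_self_mem_squareSpan (f : Dual k W) : f.smulRight f ∈ squareSpan k W :=
  Submodule.subset_span (Set.mem_range_self f)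

theorem smulRight_add_smulRight_mem_squareSpan (f g : Dual k W) :
    f.smulRight g + g.smulRight f ∈ squareSpan k W := by
  have hpolar : f.smulRight g + g.smulRight f =
      (f + g).smulRight (f + g) + (-1 : k) • (f.smulRight f + g.smulRight g) := by
    ext x y
    simp only [LinearMap.add_apply, LinearMap.smulRight_apply, LinearMap.smul_apply, smul_eq_mul]
    ring
  rw [hpolar]
  exact add_mem (smulRight_self_mem_squareSpan _) (Submodule.smul_mem _ _
    (add_mem (smulRight_self_mem_squareSpan _) (smulRight_self_mem_squareSpan _)))

theorem _root_.LinearMap.BilinForm.IsSymm.mem_squareSpan [FiniteDimensional k W]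
    {B : LinearMap.BilinForm k W} (hB : B.IsSymm) : B ∈ squareSpan k W := by
  let b := Module.finBasis k W
  have hB_expand : B = ∑ i, B (b i) (b i) • (b.coord i).smulRight (b.coord i) +
      ∑ i, ∑ j ∈ Finset.Ioi i, B (b i) (b j) •
        ((b.coord i).smulRight (b.coord j) + (b.coord j).smulRight (b.coord i)) := by
    refine LinearMap.BilinForm.ext_basis b fun p q => ?_
    simp only [LinearMap.add_apply, LinearMap.smul_apply, LinearMap.smulRight_apply,
      LinearMap.sum_apply, Basis.coord_apply, Basis.repr_self, smul_eq_mul, Finsupp.single_apply,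
      mul_ite, mul_one, mul_zero, mul_add, Finset.sum_ite_eq, Finset.mem_univ, ↓reduceIte,
      Finset.sum_add_distrib, Finset.mem_Ioi, Finset.sum_ite_irrel, Finset.sum_const_zero]
    simp_rw [← ite_and, and_comm, ite_and, Finset.sum_ite_eq]
    rcases lt_trichotomy p q with h | rfl | h
    · simp [h, h.ne, h.not_gt]
    · simp
    · simp [h, h.ne', h.not_gt, hB.eq (b p)]
  rw [hB_expand]
  exact add_mem (sum_mem fun i _ => Submodule.smul_mem _ _ (smulRight_self_mem_squareSpan _))
    (sum_mem fun i _ => sum_mem fun j _ =>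
      Submodule.smul_mem _ _ (smulRight_add_smulRight_mem_squareSpan _ _))

theorem _root_.LinearMap.BilinForm.IsSymm.exists_eq_sum_smul_smulRight [FiniteDimensional k W]
    {B : LinearMap.BilinForm k W} (hB : B.IsSymm) :
    ∃ (r : ℕ) (a : Fin r → k) (f : Fin r → Dual k W), B = ∑ l, a l • (f l).smulRight (f l) := by
  obtain ⟨r, a, g, hg⟩ := Submodule.mem_span_set'.1 hB.mem_squareSpan
  choose f hf using fun l => (g l).2
  refine ⟨r, a, f, hg.symm.trans ?_⟩
  simp only [hf]

end SumOfSquares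

section Lagrangian

variable {M E E' : Type*} [AddCommGroup M] [Module k M] [AddCommGroup E] [Module k E]
  [AddCommGroup E'] [Module k E'] {β : E →ₗ[k] E' →ₗ[k] k} {πX : M →ₗ[k] E} {πZ : M →ₗ[k] E'}
  {L : Submodule k M}

theorem exists_isSymm_mem_iff_of_lagrangian
    (hL : ∀ p, p ∈ L ↔ ∀ q ∈ L, β (πX p) (πZ q) = β (πX q) (πZ p)) :
    ∃ Q : LinearMap.BilinForm k (L.map πX), Q.IsSymm ∧
      ∀ p, p ∈ L ↔ ∃ X : L.map πX, (X : E) = πX p ∧ ∀ Y : L.map πX, β Y (πZ p) = Q X Y := by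
  obtain ⟨s, hs⟩ := (πX.submoduleMap L).exists_rightInverse_of_surjective
    (LinearMap.range_eq_top.2 (πX.submoduleMap_surjective L))
  have hπs (X : L.map πX) : πX (s X) = X := congr_arg Subtype.val (LinearMap.congr_fun hs X)
  have hswap (X : L.map πX) (q : M) (hq : q ∈ L) : β X (πZ q) = β (πX q) (πZ (s X)) := by
    rw [← hπs X]
    exact (hL _).1 (s X).2 q hq
  let Q := β.compl₁₂ (L.map πX).subtype (πZ ∘ₗ L.subtype ∘ₗ s)
  have hQ (X Y : L.map πX) : Q X Y = β X (πZ (s Y)) := rfl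
  have hQsymm : LinearMap.BilinForm.IsSymm Q :=
    ⟨fun X Y => by rw [hQ, hQ, hswap X _ (s Y).2, hπs]⟩
  refine ⟨Q, hQsymm, fun p => ⟨fun hp => ?_, ?_⟩⟩
  · exact ⟨⟨πX p, Submodule.mem_map_of_mem hp⟩, rfl, fun Y => by rw [hswap Y p hp, hQ]⟩
  · rintro ⟨X, hXp, hX⟩
    refine (hL p).2 fun q hq => ?_
    let Y : L.map πX := ⟨πX q, Submodule.mem_map_of_mem hq⟩
    rw [← hXp, hswap X q hq, hX Y, hQsymm.eq X Y, hQ]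

end Lagrangian

section GraphExtension

variable {A B C : Type*} [AddCommGroup A] [Module k A] [AddCommGroup B] [Module k B]
  [AddCommGroup C] [Module k C] {P : Submodule k (A × B)} {F : P →ₗ[k] C}

def graphExtension (P : Submodule k (A × B)) (F : P →ₗ[k] C) : Submodule k (A × (B × C)) :=
  LinearMap.range
    ((LinearMap.fst k A B ∘ₗ P.subtype).prod ((LinearMap.snd k A B ∘ₗ P.subtype).prod F))

theorem mem_graphExtension {x : A} {y : B} {u : C} :
    (x, (y, u)) ∈ graphExtension P F ↔ ∃ X : P, (X : A × B) = (x, y) ∧ F X = u := by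
  simp [graphExtension, Prod.ext_iff, and_assoc]

theorem forall_mem_graphExtension {R : A × (B × C) → Prop} :
    (∀ q ∈ graphExtension P F, R q) ↔ ∀ X : P, R ((X : A × B).1, ((X : A × B).2, F X)) := by
  simp only [graphExtension, LinearMap.mem_range, forall_exists_index, forall_apply_eq_imp_iff]
  rfl

end GraphExtension

variable {n m r : ℕ}

theorem dot_eq_dotProduct (x y : Fin n → k) : dot x y = x ⬝ᵥ y := rfl

def dualPairing (n m : ℕ) :
    (Fin n → k) × (Fin m → k) →ₗ[k] (Fin n → k) × (Fin m → k) →ₗ[k] k :=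
  (dotProductBilin k k).compl₁₂ (LinearMap.fst k _ _) (LinearMap.fst k _ _) -
    (dotProductBilin k k).compl₁₂ (LinearMap.snd k _ _) (LinearMap.snd k _ _)

@[simp] theorem dualPairing_apply (X Z : (Fin n → k) × (Fin m → k)) :
    dualPairing n m X Z = X.1 ⬝ᵥ Z.1 - X.2 ⬝ᵥ Z.2 := rfl

theorem sf_sub_sf_eq_zero_iff (p q : ((Fin n → k) × (Fin n → k)) × ((Fin m → k) × (Fin m → k))) :
    sf p.2 q.2 - sf p.1 q.1 = 0 ↔
      dualPairing n m (p.1.1, p.2.1) (q.1.2, q.2.2) =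
        dualPairing n m (q.1.1, q.2.1) (p.1.2, p.2.2) := by
  simp only [sf, dot_eq_dotProduct, dualPairing_apply, dotProduct_comm q.1.1, dotProduct_comm q.2.1]
  constructor <;> intro h <;> linear_combination -h

theorem purification_iff (P : Submodule k ((Fin n → k) × (Fin m → k))) (a : Fin r → k)
    (f : Fin r → Module.Dual k P) (x z : Fin n → k) (y w : Fin m → k) :
    (∃ u u' : Fin r → k, (x, (y, u)) ∈ graphExtension P (LinearMap.pi f) ∧
      (∀ q ∈ graphExtension P (LinearMap.pi f), dot z q.1 = dot w q.2.1 + dot u' q.2.2) ∧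
      ∀ i, u' i = a i * u i) ↔
    ∃ X : P, (X : (Fin n → k) × (Fin m → k)) = (x, y) ∧
      ∀ Y : P, dualPairing n m Y (z, w) = (∑ l, a l • (f l).smulRight (f l)) X Y := by
  have hQ (X Y : P) : (∑ l, a l • (f l).smulRight (f l)) X Y =
      (fun l => a l * f l X) ⬝ᵥ LinearMap.pi f Y := by
    simp [dotProduct, LinearMap.sum_apply, mul_assoc]
  simp only [mem_graphExtension, forall_mem_graphExtension, dot_eq_dotProduct, dualPairing_apply,
    hQ, dotProduct_comm z, dotProduct_comm w]
  constructor
  · rintro ⟨u, u', ⟨X, hX, rfl⟩, horth, hu'⟩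
    obtain rfl : u' = fun l => a l * f l X := funext hu'
    exact ⟨X, hX, fun Y => by linear_combination horth Y⟩
  · rintro ⟨X, hX, horth⟩
    exact ⟨LinearMap.pi f X, fun l => a l * f l X, ⟨X, hX, rfl⟩,
      fun Y => by linear_combination horth Y, fun _ => rfl⟩

/-- Purification of Lagrangian relations: every Lagrangian relation
`L ≤ (k^n ⊕ k^n) × (k^m ⊕ k^m)` (Lagrangian for the relation form
`Ω(p,q) = ω_m(p₂,q₂) − ω_n(p₁,q₁)`) is the composite of a doubled (pure)
linear relation `V ≤ k^n × (k^m × k^r)` with discard relations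
`d_{aᵢ} = {(u, aᵢ·u)}` on the extra doubled wires: there are `r`, `V` and
`a : Fin r → k` with
`L = {((x,z),(y,w)) : ∃ u u', (x,(y,u)) ∈ V ∧ (z,(w,u')) ∈ V^⊥ ∧ ∀ i, u'ᵢ = aᵢ·uᵢ}`,
where `V^⊥ = {(b,(c,v)) : ⟨b,x⟩ = ⟨c,y⟩ + ⟨v,u⟩ for all (x,(y,u)) ∈ V}`. -/
theorem statement16 (n m : ℕ)
    (L : Submodule k (((Fin n → k) × (Fin n → k)) × ((Fin m → k) × (Fin m → k))))
    (hL : ∀ p : ((Fin n → k) × (Fin n → k)) × ((Fin m → k) × (Fin m → k)),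
        p ∈ L ↔ ∀ q ∈ L, sf p.2 q.2 - sf p.1 q.1 = 0) :
    ∃ (r : ℕ) (V : Submodule k ((Fin n → k) × ((Fin m → k) × (Fin r → k))))
      (a : Fin r → k),
      ∀ p : ((Fin n → k) × (Fin n → k)) × ((Fin m → k) × (Fin m → k)),
        p ∈ L ↔ ∃ u u' : Fin r → k,
          (p.1.1, (p.2.1, u)) ∈ V ∧
          (∀ q ∈ V, dot p.1.2 q.1 = dot p.2.2 q.2.1 + dot u' q.2.2) ∧
          ∀ i : Fin r, u' i = a i * u i := by
  obtain ⟨Q, hQ, hLQ⟩ := exists_isSymm_mem_iff_of_lagrangian (β := dualPairing n m)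
    (πX := (LinearMap.fst k _ _).prodMap (LinearMap.fst k _ _))
    (πZ := (LinearMap.snd k _ _).prodMap (LinearMap.snd k _ _))
    fun p => (hL p).trans (forall₂_congr fun q _ => sf_sub_sf_eq_zero_iff p q)
  obtain ⟨r, a, f, rfl⟩ := hQ.exists_eq_sum_smul_smulRight
  exact ⟨r, graphExtension _ (LinearMap.pi f), a,
    fun p => (hLQ p).trans (purification_iff _ a f p.1.1 p.1.2 p.2.1 p.2.2).symm⟩

end Statement16
end
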